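/- If (g,≺) is a gflow for a labelled open graph (G,I,O,λ) and u ∈ V∖O with λ(u) ≠ XY, then (g',≺) is a gflow for (G∖{u}, I, O, λ restricted), where g'(v) = g(v) if u ∉ g(v) and g'(v) = g(v) Δ g(u) if u ∈ g(v). -/

import Mathlib

open Set

/-- The three measurement planes. -/
inductive MPlane | XY | XZ | YZ
deriving DecidableEq

/-- The odd neighbourhood of a set `K`: vertices with an odd number of neighbours in `K`. -/
def oddNbhd {V : Type*} (G : SimpleGraph V) (K : Set V) : Set V :=
  {u | Odd (K ∩ G.neighborSet u).ncard}

/-- `(g, prec)` is a gflow for the labelled open graph `(G, I, O, lam)`. -/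
structure GFlow {V : Type*} (G : SimpleGraph V) (I O : Set V) (lam : V → MPlane)
    (g : V → Set V) (prec : V → V → Prop) : Prop where
  irrefl : ∀ v, ¬ prec v v
  trans : ∀ u v w, prec u v → prec v w → prec u w
  noInput : ∀ v, v ∉ O → g v ∩ I = ∅
  g1 : ∀ v, v ∉ O → ∀ w ∈ g v, w ≠ v → prec v w
  g2 : ∀ v, v ∉ O → ∀ w ∈ oddNbhd G (g v), w ≠ v → prec v w
  gXY : ∀ v, v ∉ O → lam v = MPlane.XY → v ∉ g v ∧ v ∈ oddNbhd G (g v)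
  gXZ : ∀ v, v ∉ O → lam v = MPlane.XZ → v ∈ g v ∧ v ∈ oddNbhd G (g v)
  gYZ : ∀ v, v ∉ O → lam v = MPlane.YZ → v ∈ g v ∧ v ∉ oddNbhd G (g v)

/-! Since `λ(u) ≠ XY`, `u ∈ g(u)`, so none of the new correction sets contains `u`. If
`u ∈ g(v)` then `v ≺ u`, so every vertex of `g(u)` and of `Odd(g(u))` other than `u` comes after
`v`, and `v` itself lies in neither; as `Odd` commutes with `Δ`, replacing `g(v)` by `g(v) Δ g(u)`
keeps all gflow conditions at `v`. A correction set avoiding `u` remains one in `G ∖ {u}`, because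
there the odd neighbourhood of a set not containing `u` is unchanged. -/

open scoped symmDiff

lemma Set.ncard_symmDiff_add_two_mul_ncard_inter {α : Type*} {A B : Set α}
    (hA : A.Finite) (hB : B.Finite) :
    (A ∆ B).ncard + 2 * (A ∩ B).ncard = A.ncard + B.ncard := by
  rw [← Set.ncard_union_add_ncard_inter A B hA hB, two_mul, ← add_assoc,
    symmDiff_eq_sup_sdiff_inf]
  exact congrArg (· + _) <| Set.ncard_sdiff_add_ncard_of_subset
    (Set.inter_subset_left.trans Set.subset_union_left) (hA.union hB)

lemma oddNbhd_symmDiff {V : Type*} [Finite V] (G : SimpleGraph V) (A B : Set V) :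
    oddNbhd G (A ∆ B) = oddNbhd G A ∆ oddNbhd G B := by
  ext w
  have hcard := Set.ncard_symmDiff_add_two_mul_ncard_inter
    (Set.toFinite (A ∩ G.neighborSet w)) (Set.toFinite (B ∩ G.neighborSet w))
  have hodd : Odd ((A ∆ B) ∩ G.neighborSet w).ncard ↔
      Odd ((A ∩ G.neighborSet w).ncard + (B ∩ G.neighborSet w).ncard) := by
    rw [show A ∆ B ∩ G.neighborSet w = (A ∩ G.neighborSet w) ∆ (B ∩ G.neighborSet w) from
      inf_symmDiff_distrib_right _ _ _, ← hcard]
    simp [parity_simps]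
  simp only [oddNbhd, Set.mem_ofPred_eq, Set.mem_symmDiff, hodd, Nat.odd_add,
    ← Nat.not_odd_iff_even]
  tauto

lemma oddNbhd_induce_preimage {V : Type*} (G : SimpleGraph V) {s K : Set V} (hK : K ⊆ s) :
    oddNbhd (G.induce s) (Subtype.val ⁻¹' K) = Subtype.val ⁻¹' oddNbhd G K := by
  ext w
  have himage : Subtype.val '' (Subtype.val ⁻¹' K ∩ (G.induce s).neighborSet w) =
      K ∩ G.neighborSet w := by
    ext x
    constructor
    · rintro ⟨y, ⟨hyK, hadj⟩, rfl⟩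
      exact ⟨hyK, hadj⟩
    · rintro ⟨hxK, hadj⟩
      exact ⟨⟨x, hK hxK⟩, ⟨hxK, hadj⟩, rfl⟩
  simp only [oddNbhd, Set.mem_ofPred_eq, Set.mem_preimage, ← himage,
    Set.ncard_image_of_injective _ Subtype.val_injective]

structure IsCorrectionSet {V : Type*} (G : SimpleGraph V) (I : Set V) (lam : V → MPlane)
    (prec : V → V → Prop) (v : V) (K : Set V) : Prop where
  inter_inputs : K ∩ I = ∅
  prec_of_mem : ∀ w ∈ K, w ≠ v → prec v w
  prec_of_mem_oddNbhd : ∀ w ∈ oddNbhd G K, w ≠ v → prec v w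
  planeXY : lam v = MPlane.XY → v ∉ K ∧ v ∈ oddNbhd G K
  planeXZ : lam v = MPlane.XZ → v ∈ K ∧ v ∈ oddNbhd G K
  planeYZ : lam v = MPlane.YZ → v ∈ K ∧ v ∉ oddNbhd G K

theorem gFlow_iff {V : Type*} {G : SimpleGraph V} {I O : Set V} {lam : V → MPlane}
    {g : V → Set V} {prec : V → V → Prop} :
    GFlow G I O lam g prec ↔ (∀ v, ¬ prec v v) ∧ (∀ u v w, prec u v → prec v w → prec u w) ∧
      ∀ v, v ∉ O → IsCorrectionSet G I lam prec v (g v) :=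
  ⟨fun h => ⟨h.irrefl, h.trans, fun v hv =>
      ⟨h.noInput v hv, h.g1 v hv, h.g2 v hv, h.gXY v hv, h.gXZ v hv, h.gYZ v hv⟩⟩,
    fun ⟨hirr, htrans, hg⟩ => ⟨hirr, htrans, fun v hv => (hg v hv).1, fun v hv => (hg v hv).2,
      fun v hv => (hg v hv).3, fun v hv => (hg v hv).4, fun v hv => (hg v hv).5,
      fun v hv => (hg v hv).6⟩⟩

namespace IsCorrectionSet

variable {V : Type*} {G : SimpleGraph V} {I : Set V} {lam : V → MPlane}
  {prec : V → V → Prop} {u v : V} {K L : Set V}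

theorem mem_self (hK : IsCorrectionSet G I lam prec v K) (hv : lam v ≠ MPlane.XY) : v ∈ K := by
  cases hplane : lam v with
  | XY => exact absurd hplane hv
  | XZ => exact (hK.planeXZ hplane).1
  | YZ => exact (hK.planeYZ hplane).1

theorem symmDiff [Finite V] (hK : IsCorrectionSet G I lam prec v K)
    (hL : IsCorrectionSet G I lam prec u L) (hirr : ∀ v, ¬ prec v v)
    (htrans : ∀ u v w, prec u v → prec v w → prec u w) (hvu : prec v u) :
    IsCorrectionSet G I lam prec v (K ∆ L) := by
  have later : ∀ w, w ∈ L ∪ oddNbhd G L → prec v w := by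
    intro w hw
    by_cases hwu : w = u
    · exact hwu ▸ hvu
    · rcases hw with hw | hw
      · exact htrans _ _ _ hvu (hL.prec_of_mem w hw hwu)
      · exact htrans _ _ _ hvu (hL.prec_of_mem_oddNbhd w hw hwu)
  have hvL : v ∉ L := fun h => hirr v (later v (Or.inl h))
  have hvOddL : v ∉ oddNbhd G L := fun h => hirr v (later v (Or.inr h))
  have mem_iff : v ∈ K ∆ L ↔ v ∈ K := by simp [Set.mem_symmDiff, hvL]
  have mem_oddNbhd_iff : v ∈ oddNbhd G (K ∆ L) ↔ v ∈ oddNbhd G K := by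
    simp [oddNbhd_symmDiff, Set.mem_symmDiff, hvOddL]
  refine ⟨?_, ?_, ?_, ?_, ?_, ?_⟩
  · rw [Set.eq_empty_iff_forall_notMem]
    rintro w ⟨(⟨hwK, -⟩ | ⟨hwL, -⟩), hwI⟩
    · exact (Set.eq_empty_iff_forall_notMem.mp hK.inter_inputs) w ⟨hwK, hwI⟩
    · exact (Set.eq_empty_iff_forall_notMem.mp hL.inter_inputs) w ⟨hwL, hwI⟩
  · rintro w (⟨hwK, -⟩ | ⟨hwL, -⟩) hwv
    · exact hK.prec_of_mem w hwK hwv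
    · exact later w (Or.inl hwL)
  · intro w hw hwv
    rw [oddNbhd_symmDiff] at hw
    rcases hw with ⟨hwK, -⟩ | ⟨hwL, -⟩
    · exact hK.prec_of_mem_oddNbhd w hwK hwv
    · exact later w (Or.inr hwL)
  · simpa only [mem_iff, mem_oddNbhd_iff] using hK.planeXY
  · simpa only [mem_iff, mem_oddNbhd_iff] using hK.planeXZ
  · simpa only [mem_iff, mem_oddNbhd_iff] using hK.planeYZ

theorem induce {s : Set V} {v : s} (hK : IsCorrectionSet G I lam prec v K) (hKs : K ⊆ s) :
    IsCorrectionSet (G.induce s) (Subtype.val ⁻¹' I) (fun v => lam v.val)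
      (fun a b => prec a.val b.val) v (Subtype.val ⁻¹' K) := by
  have hne : ∀ w : s, w ≠ v → w.val ≠ v.val := fun w h => mt Subtype.ext h
  refine ⟨?_, fun w hw hwv => hK.prec_of_mem w hw (hne w hwv), fun w hw hwv => ?_, ?_, ?_, ?_⟩
  · rw [← Set.preimage_inter, hK.inter_inputs, Set.preimage_empty]
  · rw [oddNbhd_induce_preimage G hKs] at hw
    exact hK.prec_of_mem_oddNbhd w hw (hne w hwv)
  · simpa only [oddNbhd_induce_preimage G hKs, Set.mem_preimage] using hK.planeXY
  · simpa only [oddNbhd_induce_preimage G hKs, Set.mem_preimage] using hK.planeXZ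
  · simpa only [oddNbhd_induce_preimage G hKs, Set.mem_preimage] using hK.planeYZ

end IsCorrectionSet

/-- Deleting a vertex measured in a plane other than XY preserves gflow,
with the explicitly given updated correction function. -/
theorem gflow_deleteVertex {V : Type*} [Fintype V] (G : SimpleGraph V) (I O : Set V)
    (lam : V → MPlane) (g : V → Set V) (prec : V → V → Prop) (u : V)
    (h : GFlow G I O lam g prec) (huO : u ∉ O) (hlam : lam u ≠ MPlane.XY) :
    GFlow (G.induce {x : V | x ≠ u})
      (Subtype.val ⁻¹' I) (Subtype.val ⁻¹' O)
      (fun v => lam v.val)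
      (fun v => {w | (u ∈ g v.val ∧ w.val ∈ symmDiff (g v.val) (g u)) ∨
                     (u ∉ g v.val ∧ w.val ∈ g v.val)})
      (fun a b => prec a.val b.val) := by
  obtain ⟨hirr, htrans, hcorr⟩ := gFlow_iff.mp h
  have huu : u ∈ g u := (hcorr u huO).mem_self hlam
  refine gFlow_iff.mpr ⟨fun v => hirr v, fun a b c => htrans a b c, fun v hvO => ?_⟩
  by_cases huv : u ∈ g v.val
  · have hvu : prec v u := (hcorr v hvO).prec_of_mem u huv (Ne.symm v.prop)
    convert ((hcorr v hvO).symmDiff (hcorr u huO) hirr htrans hvu).induce ?_ using 1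
    · ext w
      simp only [Set.mem_ofPred_eq, Set.mem_preimage, huv, true_and, not_true_eq_false,
        false_and, or_false]
    · intro w hw hwu
      subst hwu
      simp [Set.mem_symmDiff, huv, huu] at hw
  · convert (hcorr v hvO).induce fun w hw hwu => huv (hwu ▸ hw) using 1
    ext w
    simp [huv]
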